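/- arXiv:2509.18215 — 4 statements merged into one kernel-verified Lean document; each statement's English description precedes it below -/
import Mathlib

section
/- If topic arguments x and y are strength-inconsistent between QBAF G and its update G', then there exists at least one SSI explanation, and the empty set is not an SSI explanation. -/
open scoped Classical

/-- A Quantitative Bipolar Argumentation Framework (QBAF). -/
structure QBAF (α : Type*) where
  args : Set α
  τ : α → ℝ
  att : Set (α × α)
  supp : Set (α × α)
  att_sub : att ⊆ args ×ˢ args
  supp_sub : supp ⊆ args ×ˢ args

namespace QBAF

variable {α : Type*}

/-- Equivalence of QBAFs: same arguments, same initial strengths on the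
arguments, same attacks and supports. -/
def Equiv (G H : QBAF α) : Prop :=
  G.args = H.args ∧ (∀ a ∈ G.args, G.τ a = H.τ a) ∧ G.att = H.att ∧ G.supp = H.supp

/-- The reversal of `G'` to `G` w.r.t. `S`. -/
noncomputable def reversal (G G' : QBAF α) (S : Set α) : QBAF α where
  args := (G'.args ∪ S) \ (S \ G.args)
  τ := fun a => if a ∈ G.args ∩ S then G.τ a else G'.τ a
  att := ((G'.att \ (S ×ˢ G.args)) ∪
      ((S ×ˢ ((G'.args ∪ S) \ (S \ G.args))) ∩ G.att)) ∩
      (((G'.args ∪ S) \ (S \ G.args)) ×ˢ ((G'.args ∪ S) \ (S \ G.args)))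
  supp := ((G'.supp \ (S ×ˢ G.args)) ∪
      ((S ×ˢ ((G'.args ∪ S) \ (S \ G.args))) ∩ G.supp)) ∩
      (((G'.args ∪ S) \ (S \ G.args)) ×ˢ ((G'.args ∪ S) \ (S \ G.args)))
  att_sub := Set.inter_subset_right
  supp_sub := Set.inter_subset_right

/-- Comparability of `x` and `y` in `G` w.r.t. semantics `σ`:
both final strengths are defined. -/
def comparable (σ : QBAF α → α → Option ℝ) (G : QBAF α) (x y : α) : Prop :=
  σ G x ≠ none ∧ σ G y ≠ none

/-- Strength consistency of `x` and `y` between `G` and `G'`. -/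
def scon (σ : QBAF α → α → Option ℝ) (G G' : QBAF α) (x y : α) : Prop :=
  (∀ a b a' b' : ℝ, σ G x = some a → σ G y = some b →
      σ G' x = some a' → σ G' y = some b' →
      (a > b → a' > b') ∧ (a < b → a' < b') ∧ (a = b → a' = b')) ∧
  (comparable σ G x y ↔ comparable σ G' x y)

/-- Sufficient strength inconsistency (SSI) explanation. -/
def SSI (σ : QBAF α → α → Option ℝ) (G G' : QBAF α) (x y : α) (S : Set α) : Prop :=
  S ⊆ G.args ∪ G'.args ∧
  ((S = ∅ ∧ scon σ G G' x y) ∨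
   (¬ scon σ G G' x y ∧
    ¬ scon σ G (reversal G G' ((G.args ∪ G'.args) \ S)) x y))

/-- ⊂-minimal SSI explanation. -/
def minSSI (σ : QBAF α → α → Option ℝ) (G G' : QBAF α) (x y : α) (S : Set α) : Prop :=
  SSI σ G G' x y S ∧ ∀ S' ⊂ S, ¬ SSI σ G G' x y S'

/-- Counterfactual strength inconsistency (CSI) explanation. -/
def CSI (σ : QBAF α → α → Option ℝ) (G G' : QBAF α) (x y : α) (C : Set α) : Prop :=
  SSI σ G G' x y C ∧ scon σ G (reversal G G' C) x y

/-- ⊂-minimal CSI explanation. -/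
def minCSI (σ : QBAF α → α → Option ℝ) (G G' : QBAF α) (x y : α) (C : Set α) : Prop :=
  CSI σ G G' x y C ∧ ∀ C' ⊂ C, ¬ CSI σ G G' x y C'

/-- (⊂-minimal) necessary strength inconsistency (NSI) explanation. -/
def NSI (σ : QBAF α → α → Option ℝ) (G G' : QBAF α) (x y : α) (N : Set α) : Prop :=
  (N = ∅ ∧ scon σ G G' x y) ∨
  (¬ scon σ G G' x y ∧ SSI σ G G' x y N ∧
   (∀ S ⊆ (G.args ∪ G'.args) \ N, ¬ SSI σ G G' x y S) ∧
   (∀ N' ⊂ N, ¬ (SSI σ G G' x y N' ∧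
      ∀ S ⊆ (G.args ∪ G'.args) \ N', ¬ SSI σ G G' x y S)))

/-- Reachability in the directed graph `(args, att ∪ supp)` of a QBAF. -/
def reach (G : QBAF α) (a b : α) : Prop :=
  Relation.TransGen (fun u v => (u, v) ∈ G.att ∪ G.supp) a b

/-- A QBAF is acyclic iff no argument is reachable from itself. -/
def Acyclic (G : QBAF α) : Prop := ∀ a, ¬ reach G a a

/-- Restriction of `G` to a set `A` of arguments. -/
def restrict (G : QBAF α) (A : Set α) : QBAF α where
  args := G.args ∩ A
  τ := G.τ
  att := G.att ∩ (A ×ˢ A)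
  supp := G.supp ∩ (A ×ˢ A)
  att_sub := by
    intro p hp
    exact ⟨⟨(G.att_sub hp.1).1, hp.2.1⟩, (G.att_sub hp.1).2, hp.2.2⟩
  supp_sub := by
    intro p hp
    exact ⟨⟨(G.supp_sub hp.1).1, hp.2.1⟩, (G.supp_sub hp.1).2, hp.2.2⟩

/-- `σ` is an aggregation-influence semantics with (parameterised) influence
function `f` and aggregation function `g`: on acyclic QBAFs, the final strength
of an argument is obtained by aggregating the final strengths of its attackers
and supporters and applying the influence of the aggregation. -/
def AggregationInfluence (σ : QBAF α → α → Option ℝ)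
    (f : ℝ → ℝ → ℝ) (g : Set ℝ → Set ℝ → ℝ) : Prop :=
  ∀ G : QBAF α, G.Acyclic → ∀ x ∈ G.args,
    σ G x = some (f (G.τ x)
      (g {s | ∃ y, (y, x) ∈ G.att ∧ σ G y = some s}
         {s | ∃ y, (y, x) ∈ G.supp ∧ σ G y = some s}))

/-- SSI explanation relativized to a class `𝒢` of QBAFs. -/
def SSIin (𝒢 : QBAF α → Prop) (σ : QBAF α → α → Option ℝ)
    (G G' : QBAF α) (x y : α) (S : Set α) : Prop :=
  S ⊆ G.args ∪ G'.args ∧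
  ((S = ∅ ∧ scon σ G G' x y) ∨
   (¬ scon σ G G' x y ∧
    ¬ scon σ G (reversal G G' ((G.args ∪ G'.args) \ S)) x y ∧
    𝒢 (reversal G G' ((G.args ∪ G'.args) \ S))))

/-- ⊂-minimal SSI explanation relativized to `𝒢`. -/
def minSSIin (𝒢 : QBAF α → Prop) (σ : QBAF α → α → Option ℝ)
    (G G' : QBAF α) (x y : α) (S : Set α) : Prop :=
  SSIin 𝒢 σ G G' x y S ∧ ∀ S' ⊂ S, ¬ SSIin 𝒢 σ G G' x y S'

/-- CSI explanation relativized to `𝒢`. -/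
def CSIin (𝒢 : QBAF α → Prop) (σ : QBAF α → α → Option ℝ)
    (G G' : QBAF α) (x y : α) (C : Set α) : Prop :=
  SSIin 𝒢 σ G G' x y C ∧ scon σ G (reversal G G' C) x y ∧ 𝒢 (reversal G G' C)

/-- ⊂-minimal CSI explanation relativized to `𝒢`. -/
def minCSIin (𝒢 : QBAF α → Prop) (σ : QBAF α → α → Option ℝ)
    (G G' : QBAF α) (x y : α) (C : Set α) : Prop :=
  CSIin 𝒢 σ G G' x y C ∧ ∀ C' ⊂ C, ¬ CSIin 𝒢 σ G G' x y C'

/-- (⊂-minimal) NSI explanation relativized to `𝒢`. -/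
def NSIin (𝒢 : QBAF α → Prop) (σ : QBAF α → α → Option ℝ)
    (G G' : QBAF α) (x y : α) (N : Set α) : Prop :=
  (N = ∅ ∧ scon σ G G' x y) ∨
  (¬ scon σ G G' x y ∧ SSIin 𝒢 σ G G' x y N ∧
   (∀ S ⊆ (G.args ∪ G'.args) \ N, ¬ SSIin 𝒢 σ G G' x y S) ∧
   (∀ N' ⊂ N, ¬ (SSIin 𝒢 σ G G' x y N' ∧
      ∀ S ⊆ (G.args ∪ G'.args) \ N', ¬ SSIin 𝒢 σ G G' x y S)))

end QBAF

namespace QBAF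

variable {α : Type*}

theorem scon_refl (σ : QBAF α → α → Option ℝ) (G : QBAF α) (x y : α) : scon σ G G x y := by
  refine ⟨fun a b a' b' ha hb ha' hb' => ?_, Iff.rfl⟩
  obtain rfl : a = a' := Option.some_injective _ (ha.symm.trans ha')
  obtain rfl : b = b' := Option.some_injective _ (hb.symm.trans hb')
  exact ⟨id, id, id⟩

theorem scon_congr_right {σ : QBAF α → α → Option ℝ} {G H H' : QBAF α} (hH : σ H = σ H')
    (x y : α) : scon σ G H x y ↔ scon σ G H' x y := by
  simp only [scon, comparable, hH]

theorem reversal_empty_equiv (G G' : QBAF α) : Equiv (reversal G G' ∅) G' := by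
  refine ⟨by simp [reversal], fun a _ => by simp [reversal], ?_, ?_⟩
  · simpa [reversal] using G'.att_sub
  · simpa [reversal] using G'.supp_sub

theorem reversal_args_union_equiv (G G' : QBAF α) :
    Equiv (reversal G G' (G.args ∪ G'.args)) G := by
  have hargs : (reversal G G' (G.args ∪ G'.args)).args = G.args := by
    ext a
    simp only [reversal, Set.mem_sdiff, Set.mem_union]
    tauto
  refine ⟨hargs, fun a ha => ?_, ?_, ?_⟩
  · rw [hargs] at ha
    simp [reversal, ha]
  · ext ⟨u, v⟩
    have := @G.att_sub (u, v)
    have := @G'.att_sub (u, v)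
    simp only [reversal, Set.mem_inter_iff, Set.mem_union, Set.mem_prod, Set.mem_sdiff] at *
    tauto
  · ext ⟨u, v⟩
    have := @G.supp_sub (u, v)
    have := @G'.supp_sub (u, v)
    simp only [reversal, Set.mem_inter_iff, Set.mem_union, Set.mem_prod, Set.mem_sdiff] at *
    tauto

theorem scon_reversal_args_union {σ : QBAF α → α → Option ℝ}
    (hσ : ∀ H H' : QBAF α, Equiv H H' → σ H = σ H') (G G' : QBAF α) (x y : α) :
    scon σ G (reversal G G' (G.args ∪ G'.args)) x y :=
  (scon_congr_right (hσ _ _ (reversal_args_union_equiv G G')) x y).mpr (scon_refl σ G x y)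

theorem SSI_args_union {σ : QBAF α → α → Option ℝ}
    (hσ : ∀ H H' : QBAF α, Equiv H H' → σ H = σ H') {G G' : QBAF α} {x y : α}
    (h : ¬ scon σ G G' x y) : SSI σ G G' x y (G.args ∪ G'.args) := by
  refine ⟨subset_rfl, .inr ⟨h, ?_⟩⟩
  rwa [Set.sdiff_self, scon_congr_right (hσ _ _ (reversal_empty_equiv G G'))]

theorem not_SSI_empty {σ : QBAF α → α → Option ℝ}
    (hσ : ∀ H H' : QBAF α, Equiv H H' → σ H = σ H') {G G' : QBAF α} {x y : α}
    (h : ¬ scon σ G G' x y) : ¬ SSI σ G G' x y ∅ := by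
  rintro ⟨-, ⟨-, hcon⟩ | ⟨-, hrev⟩⟩
  · exact h hcon
  · rw [Set.sdiff_empty] at hrev
    exact hrev (scon_reversal_args_union hσ G G' x y)

end QBAF

theorem ssi_completeness_general {α : Type*} (σ : QBAF α → α → Option ℝ)
    (hσ : ∀ H H' : QBAF α, QBAF.Equiv H H' → σ H = σ H')
    (G G' : QBAF α) (x y : α)
    (h : ¬ QBAF.scon σ G G' x y) :
    (∃ S : Set α, QBAF.SSI σ G G' x y S) ∧ ¬ QBAF.SSI σ G G' x y ∅ :=
  ⟨⟨_, QBAF.SSI_args_union hσ h⟩, QBAF.not_SSI_empty hσ h⟩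

/-- If `x` and `y` are strength-inconsistent between `G` and `G'`,
then there exists at least one SSI explanation and `∅` is not an SSI
explanation. -/
theorem ssi_completeness {α : Type*} (σ : QBAF α → α → Option ℝ)
    (hσ : ∀ H H' : QBAF α, QBAF.Equiv H H' → σ H = σ H')
    (G G' : QBAF α) (x y : α)
    (hx : x ∈ G.args ∩ G'.args) (hy : y ∈ G.args ∩ G'.args)
    (h : ¬ QBAF.scon σ G G' x y) :
    (∃ S : Set α, QBAF.SSI σ G G' x y S) ∧ ¬ QBAF.SSI σ G G' x y ∅ :=
  ssi_completeness_general σ hσ G G' x y h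
end

section
/- In case of strength inconsistency, every ⊂-minimal NSI explanation meets every ⊂-minimal SSI explanation: if x ≁ y between G and G', then for all N in NX_⊂-min and all S in SX_⊂-min we have N ∩ S ≠ ∅. -/
open scoped Classical

namespace QBAF

variable {α : Type*} {σ : QBAF α → α → Option ℝ} {G G' : QBAF α} {x y : α} {N S : Set α}

theorem NSI.not_SSI_of_subset_sdiff (hN : NSI σ G G' x y N) (h : ¬ scon σ G G' x y)
    (hS : S ⊆ (G.args ∪ G'.args) \ N) : ¬ SSI σ G G' x y S := by
  rcases hN with ⟨-, hscon⟩ | ⟨-, -, hno, -⟩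
  · exact absurd hscon h
  · exact hno S hS

theorem NSI.inter_nonempty_of_SSI (hN : NSI σ G G' x y N) (h : ¬ scon σ G G' x y)
    (hS : SSI σ G G' x y S) : (N ∩ S).Nonempty := by
  by_contra hNS
  exact hN.not_SSI_of_subset_sdiff h (fun a ha => ⟨hS.1 ha, fun haN => hNS ⟨a, haN, ha⟩⟩) hS

end QBAF

theorem nsi_meets_min_ssi_general {α : Type*} (σ : QBAF α → α → Option ℝ)
    (G G' : QBAF α) (x y : α)
    (h : ¬ QBAF.scon σ G G' x y) :
    ∀ N S : Set α, QBAF.NSI σ G G' x y N → QBAF.minSSI σ G G' x y S →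
      N ∩ S ≠ ∅ :=
  fun _ _ hN hS => (hN.inter_nonempty_of_SSI h hS.1).ne_empty

/-- In case of strength inconsistency, every (⊂-minimal) NSI
explanation meets every ⊂-minimal SSI explanation. -/
theorem nsi_meets_min_ssi {α : Type*} (σ : QBAF α → α → Option ℝ)
    (G G' : QBAF α) (x y : α)
    (hx : x ∈ G.args ∩ G'.args) (hy : y ∈ G.args ∩ G'.args)
    (h : ¬ QBAF.scon σ G G' x y) :
    ∀ N S : Set α, QBAF.NSI σ G G' x y N → QBAF.minSSI σ G G' x y S →
      N ∩ S ≠ ∅ :=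
  nsi_meets_min_ssi_general σ G G' x y h
end

section
/- Every aggregation-influence semantics satisfies the directional connectedness principle: for every acyclic QBAF G and argument x, the final strength of x in G equals the final strength of x in the restriction of G to {x} together with all arguments from which x is reachable. -/
open scoped Classical

/-! On a finite acyclic QBAF reachability is a well-founded strict order. Call `A`
parent-closed if it contains every attacker and supporter of its members. By well-founded
induction, every argument of a parent-closed `A` has the same strength in `G` and in
`G.restrict A`: its parents lie in `A` and keep their strengths, the restriction keeps every
edge into it, and an aggregation-influence semantics looks at nothing else. The arguments
from which `x` is reachable, together with `x`, form a parent-closed set. -/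

namespace QBAF

variable {α : Type*} {G : QBAF α} {A : Set α}

def ParentClosed (G : QBAF α) (A : Set α) : Prop :=
  ∀ u v, (u, v) ∈ G.att ∪ G.supp → v ∈ A → u ∈ A

theorem mem_args_of_reach {a b : α} (hab : G.reach a b) : a ∈ G.args := by
  induction hab with
  | single hab => exact hab.elim (fun h => (G.att_sub h).1) (fun h => (G.supp_sub h).1)
  | tail _ _ ih => exact ih

theorem reach_of_reach_restrict {a b : α} (hab : (G.restrict A).reach a b) : G.reach a b :=
  Relation.TransGen.mono (fun _ _ huv => huv.imp And.left And.left) a b hab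

theorem Acyclic.restrict (hG : G.Acyclic) (A : Set α) : (G.restrict A).Acyclic :=
  fun a ha => hG a (reach_of_reach_restrict ha)

theorem Acyclic.wellFoundedOn_reach (hG : G.Acyclic) (hfin : G.args.Finite) :
    G.args.WellFoundedOn G.reach :=
  haveI : IsStrictOrder α G.reach := { irrefl := hG, trans := fun _ _ _ => .trans }
  hfin.wellFoundedOn

theorem parentClosed_insert_ancestors (x : α) : G.ParentClosed ({x} ∪ {y | G.reach y x}) := by
  rintro u v huv (rfl | hv)
  · exact Or.inr (.single huv)
  · exact Or.inr (.head huv hv)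

theorem setOf_strengths_inter_prod {R : Set (α × α)} {σ₁ σ₂ : α → Option ℝ} {y : α}
    (hy : y ∈ A) (hR : ∀ u, (u, y) ∈ R → u ∈ A ∧ σ₁ u = σ₂ u) :
    {s | ∃ u, (u, y) ∈ R ∩ A ×ˢ A ∧ σ₁ u = some s} =
      {s | ∃ u, (u, y) ∈ R ∧ σ₂ u = some s} := by
  ext s
  constructor
  · rintro ⟨u, ⟨hu, -⟩, hs⟩
    exact ⟨u, hu, (hR u hu).2 ▸ hs⟩
  · rintro ⟨u, hu, hs⟩
    exact ⟨u, ⟨hu, (hR u hu).1, hy⟩, (hR u hu).2.symm ▸ hs⟩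

theorem AggregationInfluence.strength_restrict {σ : QBAF α → α → Option ℝ}
    {f : ℝ → ℝ → ℝ} {g : Set ℝ → Set ℝ → ℝ} (h : AggregationInfluence σ f g)
    (hG : G.Acyclic) (hfin : G.args.Finite) (hA : G.ParentClosed A) {y : α}
    (hy : y ∈ G.args) (hyA : y ∈ A) :
    σ (G.restrict A) y = σ G y := by
  revert hyA
  refine (hG.wellFoundedOn_reach hfin).induction hy
    (P := fun z => z ∈ A → σ (G.restrict A) z = σ G z) fun z hz ih hzA => ?_
  have hparent : ∀ u, (u, z) ∈ G.att ∪ G.supp → u ∈ A ∧ σ (G.restrict A) u = σ G u :=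
    fun u hu => ⟨hA u z hu hzA,
      ih u (mem_args_of_reach (.single hu)) (.single hu) (hA u z hu hzA)⟩
  have hatt := setOf_strengths_inter_prod (R := G.att) hzA fun u hu => hparent u (.inl hu)
  have hsupp := setOf_strengths_inter_prod (R := G.supp) hzA fun u hu => hparent u (.inr hu)
  rw [h G hG z hz, h _ (hG.restrict A) z ⟨hz, hzA⟩]
  exact congrArg (some ∘ f (G.τ z)) (congrArg₂ g hatt hsupp)

end QBAF

/-- Every aggregation-influence semantics satisfies the
directional connectedness principle: for every acyclic QBAF `G` and argument
`x`, the final strength of `x` in `G` equals the final strength of `x` in the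
restriction of `G` to `{x}` together with all arguments from which `x` is
reachable. -/
theorem aggregation_influence_directional_connectedness {α : Type*}
    (σ : QBAF α → α → Option ℝ) (f : ℝ → ℝ → ℝ) (g : Set ℝ → Set ℝ → ℝ)
    (h : QBAF.AggregationInfluence σ f g)
    (G : QBAF α) (hac : G.Acyclic) (hfin : G.args.Finite)
    (x : α) (hx : x ∈ G.args) :
    σ G x = σ (G.restrict ({x} ∪ {y | QBAF.reach G y x})) x :=
  (h.strength_restrict hac hfin (QBAF.parentClosed_insert_ancestors x) hx (Or.inl rfl)).symm
end

section
/- An argument a present in both Args and Args' whose initial strength is unchanged (τ(a) = τ'(a)) and whose sets of outgoing attacks and outgoing supports are unchanged between G and G' is not a member of any ⊂-minimal SSI, NSI, or CSI explanation of any topic arguments x and y. -/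
open scoped Classical

/-!
Removing an argument `a` from a set `S` changes the reversal `G_{←G'}(S)` only in what it does
at `a`: the initial strength of `a` and the attacks and supports leaving `a` are taken from `G`
instead of `G'`. When these agree in `G` and `G'`, the reversal is unchanged, so removing `a`
from an SSI, CSI or NSI explanation yields an explanation of the same kind, and no ⊂-minimal
explanation contains `a`.
-/

attribute [ext] QBAF

theorem Set.notMem_of_forall_ssubset_not {α : Type*} {P : Set α → Prop} {S : Set α} {a : α}
    (hP : P S → P (S \ {a})) (hS : P S) (hmin : ∀ T ⊂ S, ¬ P T) : a ∉ S :=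
  fun haS => hmin _ (Set.sdiff_singleton_ssubset.2 haS) (hP hS)

namespace QBAF

variable {α : Type*} {σ : QBAF α → α → Option ℝ} {G G' : QBAF α} {a x y : α}

structure UnchangedArg (G G' : QBAF α) (a : α) : Prop where
  mem_left : a ∈ G.args
  mem_right : a ∈ G'.args
  τ_eq : G.τ a = G'.τ a
  att_iff : ∀ b, (a, b) ∈ G.att ↔ (a, b) ∈ G'.att
  supp_iff : ∀ b, (a, b) ∈ G.supp ↔ (a, b) ∈ G'.supp

theorem mem_iff_of_singleton_prod_inter_eq {X X' A A' : Set α} {E E' : Set (α × α)}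
    (hE : E ⊆ X ×ˢ A) (hE' : E' ⊆ X' ×ˢ A')
    (h : ({a} ×ˢ A) ∩ E = ({a} ×ˢ A') ∩ E') (b : α) : (a, b) ∈ E ↔ (a, b) ∈ E' := by
  constructor
  · intro hb
    have hb' : (a, b) ∈ ({a} ×ˢ A) ∩ E := ⟨⟨rfl, (hE hb).2⟩, hb⟩
    exact (h ▸ hb').2
  · intro hb
    have hb' : (a, b) ∈ ({a} ×ˢ A') ∩ E' := ⟨⟨rfl, (hE' hb).2⟩, hb⟩
    exact (h ▸ hb').2

theorem UnchangedArg.of_singleton_prod_inter_eq (ha : a ∈ G.args ∩ G'.args)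
    (hτ : G.τ a = G'.τ a)
    (hatt : ({a} ×ˢ G.args) ∩ G.att = ({a} ×ˢ G'.args) ∩ G'.att)
    (hsupp : ({a} ×ˢ G.args) ∩ G.supp = ({a} ×ˢ G'.args) ∩ G'.supp) :
    UnchangedArg G G' a :=
  ⟨ha.1, ha.2, hτ, mem_iff_of_singleton_prod_inter_eq G.att_sub G'.att_sub hatt,
    mem_iff_of_singleton_prod_inter_eq G.supp_sub G'.supp_sub hsupp⟩

/-- The common shape of the attack and support relations of a reversal, with `B = G.args` and
`A` the arguments of the reversal. -/
theorem reversal_edges_diff_singleton {A B S : Set α} {E E' : Set (α × α)}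
    (hE : ∀ v, (a, v) ∈ E → v ∈ B) (hiff : ∀ v, (a, v) ∈ E ↔ (a, v) ∈ E') :
    ((E' \ ((S \ {a}) ×ˢ B)) ∪ (((S \ {a}) ×ˢ A) ∩ E)) ∩ (A ×ˢ A) =
      ((E' \ (S ×ˢ B)) ∪ ((S ×ˢ A) ∩ E)) ∩ (A ×ˢ A) := by
  ext ⟨u, v⟩
  rcases eq_or_ne u a with rfl | hu
  · have := hE v
    have := hiff v
    by_cases hS : u ∈ S <;> simp [hS]; tauto
  · simp [hu]

theorem UnchangedArg.reversal_diff_singleton (h : UnchangedArg G G' a) (S : Set α) :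
    reversal G G' (S \ {a}) = reversal G G' S := by
  have hargs : (G'.args ∪ (S \ {a})) \ ((S \ {a}) \ G.args) = (G'.args ∪ S) \ (S \ G.args) := by
    ext b
    rcases eq_or_ne b a with rfl | hb
    · simp [h.mem_left, h.mem_right]
    · simp [hb]
  ext1
  · exact hargs
  · funext b
    rcases eq_or_ne b a with rfl | hb
    · simp [reversal, h.τ_eq]
    · simp [reversal, hb]
  · dsimp only [reversal]
    rw [hargs]
    exact reversal_edges_diff_singleton (fun _ hv => (G.att_sub hv).2) h.att_iff
  · dsimp only [reversal]
    rw [hargs]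
    exact reversal_edges_diff_singleton (fun _ hv => (G.supp_sub hv).2) h.supp_iff

theorem UnchangedArg.reversal_eq_of_diff_singleton_eq (h : UnchangedArg G G' a) {S T : Set α}
    (hST : S \ {a} = T \ {a}) : reversal G G' S = reversal G G' T := by
  rw [← h.reversal_diff_singleton S, hST, h.reversal_diff_singleton T]

theorem SSI.diff_singleton (h : UnchangedArg G G' a) {S : Set α} (hS : SSI σ G G' x y S) :
    SSI σ G G' x y (S \ {a}) := by
  obtain ⟨hsub, ⟨rfl, hcon⟩ | ⟨hincon, hrev⟩⟩ := hS
  · exact ⟨by simp, Or.inl ⟨Set.empty_sdiff _, hcon⟩⟩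
  · refine ⟨Set.sdiff_subset.trans hsub, Or.inr ⟨hincon, ?_⟩⟩
    rwa [h.reversal_eq_of_diff_singleton_eq]
    ext b
    rcases eq_or_ne b a with rfl | hb <;> simp [*]

theorem CSI.diff_singleton (h : UnchangedArg G G' a) {C : Set α} (hC : CSI σ G G' x y C) :
    CSI σ G G' x y (C \ {a}) :=
  ⟨hC.1.diff_singleton h, by rw [h.reversal_diff_singleton]; exact hC.2⟩

theorem SSI.diff_singleton_of_forall_not (h : UnchangedArg G G' a) {N : Set α}
    (hN : SSI σ G G' x y N ∧ ∀ S ⊆ (G.args ∪ G'.args) \ N, ¬ SSI σ G G' x y S) :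
    SSI σ G G' x y (N \ {a}) ∧ ∀ S ⊆ (G.args ∪ G'.args) \ (N \ {a}), ¬ SSI σ G G' x y S := by
  refine ⟨hN.1.diff_singleton h, fun S hS hSSI => hN.2 (S \ {a}) ?_ (hSSI.diff_singleton h)⟩
  rintro b ⟨hbS, hba⟩
  obtain ⟨hbU, hbN⟩ := hS hbS
  exact ⟨hbU, fun hbN' => hbN ⟨hbN', hba⟩⟩

end QBAF

/-- An argument `a` present in both `Args` and `Args'` whose
initial strength is unchanged and whose sets of outgoing attacks and supports
are unchanged between `G` and `G'` is not a member of any ⊂-minimal SSI, NSI,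
or CSI explanation of any topic arguments `x` and `y`. -/
theorem unchanged_not_in_min_explanations {α : Type*}
    (σ : QBAF α → α → Option ℝ) (G G' : QBAF α) (a : α)
    (ha : a ∈ G.args ∩ G'.args) (hτ : G.τ a = G'.τ a)
    (hatt : (({a} : Set α) ×ˢ G.args) ∩ G.att = (({a} : Set α) ×ˢ G'.args) ∩ G'.att)
    (hsupp : (({a} : Set α) ×ˢ G.args) ∩ G.supp = (({a} : Set α) ×ˢ G'.args) ∩ G'.supp) :
    ∀ (x y : α) (S : Set α),
      (QBAF.minSSI σ G G' x y S ∨ QBAF.NSI σ G G' x y S ∨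
       QBAF.minCSI σ G G' x y S) → a ∉ S := by
  intro x y S hS
  have h := QBAF.UnchangedArg.of_singleton_prod_inter_eq ha hτ hatt hsupp
  rcases hS with ⟨hSSI, hmin⟩ | (⟨rfl, -⟩ | ⟨-, hSSI, hall, hmin⟩) | ⟨hCSI, hmin⟩
  · exact Set.notMem_of_forall_ssubset_not (QBAF.SSI.diff_singleton h) hSSI hmin
  · exact Set.notMem_empty a
  · exact Set.notMem_of_forall_ssubset_not (QBAF.SSI.diff_singleton_of_forall_not h)
      ⟨hSSI, hall⟩ hmin
  · exact Set.notMem_of_forall_ssubset_not (QBAF.CSI.diff_singleton h) hCSI hmin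
end
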